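/- Let a camera move with C¹ rotation R(t) ∈ SO(3) and translation 𝑻(t), R(0) = I, 𝑻(0) = 0, observing a fixed 3D point Γʷ (constant in t) with camera coordinates Γ(t) = R(t)Γʷ + 𝑻(t), depth ρ = ⟨e₃, Γ⟩ > 0, and image point γ = Γ/ρ. With Ω̂ = R′(0)R(0)ᵀ with axial vector Ω and V = 𝑻′(0), the differential epipolar (essential) constraint holds at t = 0: ⟨γ_t, V × γ⟩ + ⟨γ, Ω × (V × γ)⟩ = 0. In particular the image position and velocity of a fixed point constrain the differential camera motion (V, Ω) independently of the unknown depth ρ. -/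

import Mathlib

open scoped RealInnerProductSpace

attribute [local instance] Matrix.frobeniusNormedAddCommGroup Matrix.frobeniusNormedSpace

noncomputable section

/-- ℝ³ with the Euclidean inner product. -/
abbrev V3 : Type := EuclideanSpace ℝ (Fin 3)

/-- The third standard basis vector e₃ = (0,0,1). -/
def e3 : V3 := WithLp.toLp 2 ![0, 0, 1]

/-- The cross product on ℝ³. -/
def cross3 (u v : V3) : V3 :=
  WithLp.toLp 2 ![u 1 * v 2 - u 2 * v 1, u 2 * v 0 - u 0 * v 2, u 0 * v 1 - u 1 * v 0]

/-- Matrix–vector multiplication, valued in ℝ³ with the Euclidean structure. -/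
def mulV (A : Matrix (Fin 3) (Fin 3) ℝ) (v : V3) : V3 := WithLp.toLp 2 (A.mulVec v)

/-! If `Γ(0) = Γʷ` and `R(0) = I`, the camera-frame velocity of the point is `Ω × Γ + V`, and the
image velocity is `γ_t = ρ⁻¹ (Ω × Γ + V - ρ_t γ)`. Pairing with `V × γ` kills the `V` and `γ` terms,
leaving `⟨Ω × γ, V × γ⟩`, which the triple-product identity turns into `-⟨γ, Ω × (V × γ)⟩`. -/

section Cross

variable (u v w : V3)

theorem inner_cross3 : ⟪u, cross3 v w⟫ =
    u 0 * (v 1 * w 2 - v 2 * w 1) + u 1 * (v 2 * w 0 - v 0 * w 2) + u 2 * (v 0 * w 1 - v 1 * w 0) := by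
  simp only [cross3, PiLp.inner_apply, Fin.sum_univ_three, RCLike.inner_apply, conj_trivial,
    Matrix.cons_val_zero, Matrix.cons_val_one, Matrix.cons_val_two, Matrix.head_cons,
    Matrix.tail_cons]
  ring

theorem inner_cross3_self_left : ⟪u, cross3 u v⟫ = 0 := by
  rw [inner_cross3]; ring

theorem inner_cross3_self_right : ⟪v, cross3 u v⟫ = 0 := by
  rw [inner_cross3]; ring

theorem inner_cross3_right_eq_neg : ⟪u, cross3 v w⟫ = -⟪cross3 v u, w⟫ := by
  rw [real_inner_comm w, inner_cross3, inner_cross3]; ring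

theorem cross3_smul_right (a : ℝ) : cross3 u (a • v) = a • cross3 u v := by
  ext i
  fin_cases i <;> simp [cross3] <;> ring

end Cross

theorem mulV_one (v : V3) : mulV 1 v = v := by
  simp [mulV]

theorem HasDerivAt.mulV_const {R : ℝ → Matrix (Fin 3) (Fin 3) ℝ} {R' : Matrix (Fin 3) (Fin 3) ℝ}
    {t : ℝ} (hR : HasDerivAt R R' t) (w : V3) :
    HasDerivAt (fun s => mulV (R s) w) (mulV R' w) t := by
  let L : Matrix (Fin 3) (Fin 3) ℝ →ₗ[ℝ] V3 :=
    { toFun := fun A => mulV A w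
      map_add' := fun A B => by simp [mulV, Matrix.add_mulVec]
      map_smul' := fun a A => by simp [mulV, Matrix.smul_mulVec] }
  exact L.toContinuousLinearMap.hasFDerivAt.comp_hasDerivAt t hR

theorem HasDerivAt.perspective {E : Type*} [NormedAddCommGroup E] [InnerProductSpace ℝ E]
    {Γ : ℝ → E} {Γ' : E} {t : ℝ} (a : E) (hΓ : HasDerivAt Γ Γ' t) (hρ : ⟪a, Γ t⟫ ≠ 0) :
    HasDerivAt (fun s => ⟪a, Γ s⟫⁻¹ • Γ s)
      (⟪a, Γ t⟫⁻¹ • (Γ' - ⟪a, Γ'⟫ • (⟪a, Γ t⟫⁻¹ • Γ t))) t := by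
  have hρd : HasDerivAt (fun s => ⟪a, Γ s⟫) ⟪a, Γ'⟫ t :=
    (innerSL ℝ a).hasFDerivAt.comp_hasDerivAt t hΓ
  convert (hρd.inv hρ).smul hΓ using 1
  · rfl
  · rw [smul_sub, smul_smul, smul_smul, sub_eq_add_neg, ← neg_smul]
    congr 2
    field_simp

theorem differential_epipolar_identity {ρ : ℝ} (hρ : ρ ≠ 0) (c : ℝ) (Ω V γ : V3) :
    ⟪ρ⁻¹ • (cross3 Ω (ρ • γ) + V - c • γ), cross3 V γ⟫ + ⟪γ, cross3 Ω (cross3 V γ)⟫ = 0 := by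
  have hrot : ⟪ρ⁻¹ • cross3 Ω (ρ • γ), cross3 V γ⟫ = ⟪cross3 Ω γ, cross3 V γ⟫ := by
    rw [cross3_smul_right, smul_smul, inv_mul_cancel₀ hρ, one_smul]
  rw [smul_sub, smul_add, smul_smul, inner_sub_left, inner_add_left, hrot, real_inner_smul_left,
    real_inner_smul_left, inner_cross3_self_right, inner_cross3_self_left,
    inner_cross3_right_eq_neg γ Ω]
  ring

theorem differential_epipolar_constraint_general
    (R R' : ℝ → Matrix (Fin 3) (Fin 3) ℝ)
    (Ω : V3)
    (Tr Tr' : ℝ → V3)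
    (Γw : V3)
    (Γ : ℝ → V3) (ρ : ℝ → ℝ) (γ γ' : ℝ → V3)
    -- camera motion: R(t) ∈ SO(3), C¹, with R(0) = I, 𝑻(0) = 0
    (hR' : ∀ t, HasDerivAt R (R' t) t)
    (hR0 : R 0 = 1)
    -- Ω is the axial vector of the skew-symmetric Ω̂ = R′(0)R(0)ᵀ
    (hΩ : ∀ v : V3, mulV (R' 0 * (R 0).transpose) v = cross3 Ω v)
    (hTr' : ∀ t, HasDerivAt Tr (Tr' t) t)
    (hTr0 : Tr 0 = 0)
    -- fixed point with camera coordinates, depth and image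
    (hΓ : ∀ t, Γ t = mulV (R t) Γw + Tr t)
    (hρ : ∀ t, ρ t = ⟪e3, Γ t⟫)
    (hρpos : ∀ t, 0 < ρ t)
    (hγ : ∀ t, γ t = (ρ t)⁻¹ • Γ t)
    (hγ' : ∀ t, HasDerivAt γ (γ' t) t) :
    -- conclusion at t = 0, with V = 𝑻′(0)
    ⟪γ' 0, cross3 (Tr' 0) (γ 0)⟫ + ⟪γ 0, cross3 Ω (cross3 (Tr' 0) (γ 0))⟫ = 0 := by
  have hΓ0 : Γ 0 = Γw := by rw [hΓ, hR0, hTr0, add_zero, mulV_one]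
  have hΩΓ : mulV (R' 0) Γw = cross3 Ω Γw := by
    simpa only [hR0, Matrix.transpose_one, mul_one] using hΩ Γw
  have hΓd : HasDerivAt Γ (cross3 Ω (Γ 0) + Tr' 0) 0 := by
    rw [hΓ0, ← hΩΓ, funext hΓ]
    exact ((hR' 0).mulV_const Γw).add (hTr' 0)
  have hρ0 : ρ 0 ≠ 0 := (hρpos 0).ne'
  have hγd := hΓd.perspective e3 (hρ 0 ▸ hρ0)
  simp only [← hρ, ← hγ] at hγd
  have hΓγ : Γ 0 = ρ 0 • γ 0 := by rw [hγ, smul_smul, mul_inv_cancel₀ hρ0, one_smul]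
  rw [(hγ' 0).unique hγd, hΓγ]
  exact differential_epipolar_identity hρ0 _ _ _ _

/-- the differential epipolar (essential) constraint for the image
of a fixed 3D point under differential camera motion `(V, Ω)`: at `t = 0`,
`⟨γ_t, V × γ⟩ + ⟨γ, Ω × (V × γ)⟩ = 0`. -/
theorem differential_epipolar_constraint
    (R R' : ℝ → Matrix (Fin 3) (Fin 3) ℝ)
    (Ω : V3)
    (Tr Tr' : ℝ → V3)
    (Γw : V3)
    (Γ : ℝ → V3) (ρ : ℝ → ℝ) (γ γ' : ℝ → V3)
    -- camera motion: R(t) ∈ SO(3), C¹, with R(0) = I, 𝑻(0) = 0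
    (hRorth : ∀ t, R t * (R t).transpose = 1)
    (hRdet : ∀ t, (R t).det = 1)
    (hR' : ∀ t, HasDerivAt R (R' t) t)
    (hR0 : R 0 = 1)
    -- Ω is the axial vector of the skew-symmetric Ω̂ = R′(0)R(0)ᵀ
    (hΩ : ∀ v : V3, mulV (R' 0 * (R 0).transpose) v = cross3 Ω v)
    (hTr' : ∀ t, HasDerivAt Tr (Tr' t) t)
    (hTr0 : Tr 0 = 0)
    -- fixed point with camera coordinates, depth and image
    (hΓ : ∀ t, Γ t = mulV (R t) Γw + Tr t)
    (hρ : ∀ t, ρ t = ⟪e3, Γ t⟫)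
    (hρpos : ∀ t, 0 < ρ t)
    (hγ : ∀ t, γ t = (ρ t)⁻¹ • Γ t)
    (hγ' : ∀ t, HasDerivAt γ (γ' t) t) :
    -- conclusion at t = 0, with V = 𝑻′(0)
    ⟪γ' 0, cross3 (Tr' 0) (γ 0)⟫ + ⟪γ 0, cross3 Ω (cross3 (Tr' 0) (γ 0))⟫ = 0 :=
  differential_epipolar_constraint_general R R' Ω Tr Tr' Γw Γ ρ γ γ' hR' hR0 hΩ hTr' hTr0 hΓ hρ
    hρpos hγ hγ'
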